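/- arXiv:2312.07967 — 2 statements merged into one kernel-verified Lean document; each statement's English description precedes it below -/
import Mathlib

section
/- If A ∈ U_{n+1} has all superdiagonal entries equal to 1, then A^4 lies in U_{(4)}, i.e., (A^4)_{i,j} = 0 whenever 0 < j - i < 4. -/
/-- `M` is upper unitriangular: 1's on the diagonal, 0's below. -/
def IsUT {N : ℕ} (M : Matrix (Fin N) (Fin N) (ZMod 2)) : Prop :=
  (∀ i, M i i = 1) ∧ ∀ i j : Fin N, (j : ℕ) < (i : ℕ) → M i j = 0

/-- `M` lies in the `k`-th layer `U_{(k)}`: the `(i,j)`-entry vanishes whenever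
`0 < j - i < k`. -/
def InLayer {N : ℕ} (k : ℕ) (M : Matrix (Fin N) (Fin N) (ZMod 2)) : Prop :=
  ∀ i j : Fin N, (i : ℕ) < (j : ℕ) → (j : ℕ) < (i : ℕ) + k → M i j = 0

/-- Multiplying matrices with gaps `a` and `b` gives a matrix with gap `a + b`. -/
lemma gap_mul {N a b : ℕ} {M P : Matrix (Fin N) (Fin N) (ZMod 2)}
    (hM : ∀ i j : Fin N, (j : ℕ) < (i : ℕ) + a → M i j = 0)
    (hP : ∀ i j : Fin N, (j : ℕ) < (i : ℕ) + b → P i j = 0) :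
    ∀ i j : Fin N, (j : ℕ) < (i : ℕ) + (a + b) → (M * P) i j = 0 := by
  intro i j hj
  rw [Matrix.mul_apply]
  apply Finset.sum_eq_zero
  intro k _
  by_cases h : (k : ℕ) < (i : ℕ) + a
  · rw [hM i k h, zero_mul]
  · rw [hP k j (by omega), mul_zero]

lemma one_add_sq {N : ℕ} (M : Matrix (Fin N) (Fin N) (ZMod 2)) :
    (1 + M) ^ 2 = 1 + M ^ 2 := by
  have h0 : M + M = 0 := by
    ext i j
    simpa using CharTwo.add_self_eq_zero (M i j)
  have h : (1 + M) ^ 2 = 1 + (M + M) + M ^ 2 := by noncomm_ring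
  rw [h, h0, add_zero]

/-- If `A ∈ U_{n+1}` has all superdiagonal entries equal to `1`, then `A⁴` lies
in `U_{(4)}`: `(A⁴)_{i,j} = 0` whenever `0 < j - i < 4`. -/
theorem stmt_4 (n : ℕ)
    (A : Matrix (Fin (n + 1)) (Fin (n + 1)) (ZMod 2)) (hA : IsUT A)
    (hsup : ∀ i : Fin n, A i.castSucc i.succ = 1) :
    InLayer 4 (A ^ 4) := by
  obtain ⟨hd, hl⟩ := hA
  set B : Matrix (Fin (n + 1)) (Fin (n + 1)) (ZMod 2) := A - 1 with hBdef
  have hA1 : A = 1 + B := by rw [hBdef]; abel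
  have hA4 : A ^ 4 = 1 + B ^ 2 * B ^ 2 := by
    have : A ^ 4 = ((1 + B) ^ 2) ^ 2 := by rw [← pow_mul, ← hA1]
    rw [this, one_add_sq, one_add_sq, pow_two]
  have hB1 : ∀ i j : Fin (n + 1), (j : ℕ) < (i : ℕ) + 1 → B i j = 0 := by
    intro i j hj
    have : B i j = A i j - (1 : Matrix _ _ (ZMod 2)) i j := by rw [hBdef]; rfl
    rw [this]
    rcases Nat.lt_or_ge (j : ℕ) (i : ℕ) with h | h
    · rw [hl i j h, Matrix.one_apply_ne (by intro he; omega), sub_zero]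
    · have hij : i = j := Fin.ext (by omega)
      subst hij
      rw [hd i, Matrix.one_apply_eq, sub_self]
  have hB2 : ∀ i j : Fin (n + 1), (j : ℕ) < (i : ℕ) + 2 → (B ^ 2) i j = 0 := by
    intro i j hj
    rw [pow_two]
    exact gap_mul hB1 hB1 i j hj
  have hB4 : ∀ i j : Fin (n + 1), (j : ℕ) < (i : ℕ) + 4 → (B ^ 2 * B ^ 2) i j = 0 :=
    fun i j hj => gap_mul hB2 hB2 i j hj
  intro i j hij hjk
  rw [hA4, Matrix.add_apply, Matrix.one_apply_ne (by intro he; omega),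
    hB4 i j hjk, add_zero]
end

section
/- Let V be a vector space over F_2 with basis {χ_0, β_1, ..., β_m, ψ}, and let q : V × V → W be a symmetric bilinear form into an F_2-vector space W = W_0 ⊕ W_1 such that: q restricted to Span(χ_0, β_1,...,β_m) lands in W_0; q(v, ψ) ∈ W_1 for all v ∈ Span(χ_0, β_1,...,β_m); q(ψ,ψ) = q(χ_0, ψ); and the map Span(χ_0, β_1,...,β_m) → W_1, v ↦ q(v, ψ), is injective. Write α = aχ_0 + β + bψ and α' = a'χ_0 + β' + b'ψ with a,b,a',b' ∈ F_2 and β, β' ∈ Span(β_1,...,β_m), and assume α, α' ≠ 0 and q(α, α') = 0. Then either b = b' = 0 (so α, α' ∈ Span(χ_0, β_1,...,β_m)), or b = b' = 1, β = β', and a' = a + 1, i.e., α' = α + χ_0. -/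
/-- Linear-algebraic content of Lemma 4.3: let `V` be an `F_2`-vector space with
basis `{χ₀, β₁, …, β_m, ψ}` and `q` a symmetric bilinear map into `W = W₀ × W₁`
such that `q` restricted to `S₀ = Span(χ₀, β₁, …, β_m)` lands in `W₀`,
`q(v, ψ) ∈ W₁` for `v ∈ S₀`, `q(ψ,ψ) = q(χ₀,ψ)`, and `v ↦ q(v,ψ)` is injective
on `S₀`. If `α = aχ₀ + β + bψ` and `α' = a'χ₀ + β' + b'ψ` are nonzero with
`q(α, α') = 0`, then either `b = b' = 0`, or `b = b' = 1`, `β = β'` and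
`a' = a + 1` (i.e. `α' = α + χ₀`). -/
theorem stmt_16 (V W₀ W₁ : Type)
    [AddCommGroup V] [Module (ZMod 2) V]
    [AddCommGroup W₀] [Module (ZMod 2) W₀]
    [AddCommGroup W₁] [Module (ZMod 2) W₁]
    (m : ℕ) (χ₀ ψ : V) (βv : Fin m → V)
    (hindep : LinearIndependent (ZMod 2)
      (Sum.elim βv (fun b : Bool => if b then χ₀ else ψ)))
    (hspan : Submodule.span (ZMod 2) (Set.range βv ∪ {χ₀, ψ}) = ⊤)
    (q : V →ₗ[ZMod 2] V →ₗ[ZMod 2] W₀ × W₁)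
    (hsym : ∀ u v, q u v = q v u)
    (hW0 : ∀ u v, u ∈ Submodule.span (ZMod 2) (insert χ₀ (Set.range βv)) →
      v ∈ Submodule.span (ZMod 2) (insert χ₀ (Set.range βv)) → (q u v).2 = 0)
    (hW1 : ∀ u ∈ Submodule.span (ZMod 2) (insert χ₀ (Set.range βv)), (q u ψ).1 = 0)
    (hψψ : q ψ ψ = q χ₀ ψ)
    (hinj : ∀ u ∈ Submodule.span (ZMod 2) (insert χ₀ (Set.range βv)),
      q u ψ = 0 → u = 0)
    (a b a' b' : ZMod 2) (β β' : V)
    (hβ : β ∈ Submodule.span (ZMod 2) (Set.range βv))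
    (hβ' : β' ∈ Submodule.span (ZMod 2) (Set.range βv))
    (α α' : V)
    (hα : α = a • χ₀ + β + b • ψ) (hα' : α' = a' • χ₀ + β' + b' • ψ)
    (hne : α ≠ 0) (hne' : α' ≠ 0)
    (hq : q α α' = 0) :
    (b = 0 ∧ b' = 0) ∨ (b = 1 ∧ b' = 1 ∧ β = β' ∧ a' = a + 1) := by
  classical
  set S := Submodule.span (ZMod 2) (insert χ₀ (Set.range βv)) with hS
  have hχS : χ₀ ∈ S := Submodule.subset_span (Set.mem_insert _ _)
  have hsub : Submodule.span (ZMod 2) (Set.range βv) ≤ S :=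
    Submodule.span_mono (Set.subset_insert _ _)
  have hβS : β ∈ S := hsub hβ
  have hβ'S : β' ∈ S := hsub hβ'
  set u : V := a • χ₀ + β with hu
  set u' : V := a' • χ₀ + β' with hu'
  have huS : u ∈ S := S.add_mem (S.smul_mem _ hχS) hβS
  have hu'S : u' ∈ S := S.add_mem (S.smul_mem _ hχS) hβ'S
  set w : V := b' • u + b • u' + (b * b') • χ₀ with hw
  have hwS : w ∈ S := S.add_mem (S.add_mem (S.smul_mem _ huS) (S.smul_mem _ hu'S))
    (S.smul_mem _ hχS)
  have key : q α α' = q u u' + q w ψ := by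
    rw [hα, hα']
    simp only [map_add, map_smul, LinearMap.add_apply, LinearMap.smul_apply, hw, hψψ]
    rw [hsym ψ u', smul_add, smul_smul, mul_comm b' b]
    abel
  have hsum : q u u' + q w ψ = 0 := by rw [← key]; exact hq
  have hq2 : (q u u').2 = 0 := hW0 u u' huS hu'S
  have hq1 : (q w ψ).1 = 0 := hW1 w hwS
  have hwψ : q w ψ = 0 := by
    have h1 := congrArg Prod.fst hsum
    have h2 := congrArg Prod.snd hsum
    simp only [Prod.fst_add, Prod.snd_add, Prod.fst_zero, Prod.snd_zero, hq1, hq2,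
      add_zero, zero_add] at h1 h2
    exact Prod.ext hq1 h2
  have hw0 : w = 0 := hinj w hwS hwψ
  have two : ∀ x : ZMod 2, x = 0 ∨ x = 1 := by decide
  rcases two b with hb | hb <;> rcases two b' with hb' | hb'
  · exact Or.inl ⟨hb, hb'⟩
  · -- b = 0, b' = 1 : w = u = 0, so α = 0
    exfalso
    apply hne
    rw [hα, hb, zero_smul, add_zero]
    have : u = 0 := by
      have := hw0
      rw [hw, hb, hb'] at this
      simpa using this
    exact this
  · exfalso
    apply hne'
    rw [hα', hb', zero_smul, add_zero]
    have : u' = 0 := by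
      have := hw0
      rw [hw, hb, hb'] at this
      simpa using this
    exact this
  · -- b = b' = 1
    have hww : u + u' + χ₀ = 0 := by
      have := hw0
      rw [hw, hb, hb'] at this
      simpa using this
    have hcd : (a + a' + 1) • χ₀ + (β + β') = 0 := by
      rw [← hww, hu, hu']
      rw [add_smul, add_smul, one_smul]
      abel
    rcases two (a + a' + 1) with hc | hc
    · -- c = 0 : β + β' = 0
      rw [hc, zero_smul, zero_add] at hcd
      have hββ : β = β' := by
        have h' : β' = -β := by
          rw [eq_neg_iff_add_eq_zero, add_comm]; exact hcd
        rw [h', ← neg_one_smul (ZMod 2) β, show (-1 : ZMod 2) = 1 by decide, one_smul]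
      have ha : a' = a + 1 := by
        rcases two a with h1 | h1 <;> rcases two a' with h2 | h2 <;>
          subst h1 <;> subst h2 <;> revert hc <;> decide
      exact Or.inr ⟨hb, hb', hββ, ha⟩
    · -- c = 1 : χ₀ ∈ span βv, contradiction
      exfalso
      rw [hc, one_smul] at hcd
      have hχmem : χ₀ ∈ Submodule.span (ZMod 2) (Set.range βv) := by
        have h' : χ₀ = -(β + β') := by
          rw [eq_neg_iff_add_eq_zero]; exact hcd
        rw [h']
        exact Submodule.neg_mem _ (Submodule.add_mem _ hβ hβ')
      rw [linearIndependent_sum] at hindep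
      obtain ⟨hβind, hgind, hdisj⟩ := hindep
      have hχrange : χ₀ ∈ Submodule.span (ZMod 2)
          (Set.range (fun b : Bool => if b then χ₀ else ψ)) :=
        Submodule.subset_span ⟨true, rfl⟩
      have hχ0 : χ₀ = 0 :=
        Submodule.disjoint_def.mp hdisj χ₀ hχmem hχrange
      have : (fun b : Bool => if b then χ₀ else ψ) true ≠ 0 := hgind.ne_zero true
      simp [hχ0] at this
end
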